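/- (Hasse–Davenport consequence) Let q = p^s and let ψ be a nontrivial additive character of F_p, χ the quadratic character of F_p^×. Denote by Tr: F_{p^s} → F_p the trace and N: F_{p^s}^× → F_p^× the norm. If τ(ψ,χ) = ∑_{α∈F_p^×} χ(α)ψ(α) and p ≡ 1 mod 4 (so τ(ψ,χ) = ±√p), then ∑_{x ∈ F_{p^s}^×} χ(N(x)) ψ(Tr(x)) = −(−τ(ψ,χ))^s. Moreover the quadratic character of F_{p^s}^× coincides with χ ∘ N. -/

import Mathlib

/-!
Both sums are quadratic Gauss sums. Euler's criterion identifies `χ ∘ N` with the quadratic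
character of `K = 𝔽_{p^s}`: both are `x ↦ x ^ ((p^s - 1) / 2)`. So the left side is the Gauss sum
of the quadratic character of `K` against `ψ ∘ Tr`. In odd characteristic this Gauss sum is
`∑_y ψ(Tr y²)`. Diagonalising the trace form in an orthogonal basis `v` splits it into the
one-variable sums `∑_t ψ(a_i t²) = χ(a_i) τ`, where `a_i = Tr(v_i²)`, so it equals
`χ(∏ a_i) τ^s`. The product `∏ a_i` is the discriminant of `v`, the square of the determinant `δ`
of the Moore matrix `(v_i ^ p^k)`. Frobenius permutes the columns of that matrix cyclically,
so `δ^p = (-1)^(s-1) δ`, and then `χ(∏ a_i) = δ^(p-1) = (-1)^(s-1)`.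
-/

noncomputable section
open scoped Classical

/-- The additive character `ψ(a) = e^{2πi a/p}` of `𝔽_p`. -/
def psiC (p : ℕ) (a : ZMod p) : ℂ :=
  Complex.exp (2 * Real.pi * Complex.I * (a.val : ℂ) / p)

open Finset Matrix

theorem AddChar.map_sum_eq_prod {A M ι : Type*} [AddCommMonoid A] [CommMonoid M]
    (ψ : AddChar A M) (s : Finset ι) (f : ι → A) : ψ (∑ i ∈ s, f i) = ∏ i ∈ s, ψ (f i) :=
  map_prod ψ.toMonoidHom (fun i => Multiplicative.ofAdd (f i)) s

theorem gaussSum_eq_sum_units {R R' : Type*} [CommRing R] [Fintype R] [DecidableEq R]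
    [CommRing R'] (χ : MulChar R R') (ψ : AddChar R R') :
    gaussSum χ ψ = ∑ u : Rˣ, χ u * ψ u := by
  rw [gaussSum, ← sum_filter_of_ne (p := IsUnit) fun x _ h => ?_]
  · symm
    refine sum_bij (fun u _ => (u : R)) (fun u _ => by simp) (fun u _ v _ => Units.ext)
      (fun x hx => ?_) (fun _ _ => rfl)
    obtain ⟨u, rfl⟩ := (mem_filter.mp hx).2
    exact ⟨u, mem_univ _, rfl⟩
  · by_contra hx
    simp [MulChar.map_nonunit χ hx] at h

section QuadraticGaussSum

variable {F R : Type*} [Field F] [Fintype F] [DecidableEq F] [CommRing R] [IsDomain R]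

theorem sum_addChar_sq_eq_gaussSum (hF : ringChar F ≠ 2) {ψ : AddChar F R} (hψ : ψ ≠ 1) :
    ∑ y : F, ψ (y ^ 2) = gaussSum ((quadraticChar F).ringHomComp (Int.castRingHom R)) ψ := by
  have card_sqrts (x : F) : (#{y | y ^ 2 = x} : R) = quadraticChar F x + 1 := by
    simpa [Set.toFinset_ofPred] using congrArg (Int.cast : ℤ → R) (quadraticChar_card_sqrts hF x)
  calc ∑ y : F, ψ (y ^ 2)
      = ∑ x : F, ∑ y with y ^ 2 = x, ψ (y ^ 2) := (sum_fiberwise _ _ _).symm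
    _ = ∑ x : F, (quadraticChar F x + 1 : R) * ψ x := by
      refine sum_congr rfl fun x _ => ?_
      rw [sum_congr rfl fun y hy => by rw [(mem_filter.mp hy).2], sum_const, nsmul_eq_mul,
        card_sqrts]
    _ = gaussSum ((quadraticChar F).ringHomComp (Int.castRingHom R)) ψ := by
      simp [add_mul, sum_add_distrib, AddChar.sum_eq_zero_of_ne_one hψ, gaussSum]

theorem sum_addChar_mul_sq (hF : ringChar F ≠ 2) {ψ : AddChar F R} (hψ : ψ.IsPrimitive)
    {a : F} (ha : a ≠ 0) :
    ∑ y : F, ψ (a * y ^ 2) =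
      quadraticChar F a * gaussSum ((quadraticChar F).ringHomComp (Int.castRingHom R)) ψ := by
  set χ := (quadraticChar F).ringHomComp (Int.castRingHom R)
  have hχa_sq : (quadraticChar F a : R) * quadraticChar F a = 1 := by
    rw [← Int.cast_mul, ← sq, quadraticChar_sq_one ha, Int.cast_one]
  calc ∑ y : F, ψ (a * y ^ 2)
      = gaussSum χ (ψ.mulShift a) := sum_addChar_sq_eq_gaussSum hF (hψ ha)
    _ = quadraticChar F a * (χ a * gaussSum χ (ψ.mulShift a)) := by
      rw [← mul_assoc, MulChar.ringHomComp_apply, eq_intCast, hχa_sq, one_mul]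
    _ = quadraticChar F a * gaussSum χ ψ := by
      rw [← gaussSum_mulShift χ ψ (Units.mk0 a ha), Units.val_mk0]

end QuadraticGaussSum

namespace LinearMap.BilinForm

variable {F V ι : Type*} [CommRing F] [AddCommGroup V] [Module F V] [Fintype ι]

theorem apply_sum_smul_self_of_isOrthoᵢ {B : LinearMap.BilinForm F V} {v : ι → V}
    (hv : B.IsOrthoᵢ v) (c : ι → F) :
    B (∑ i, c i • v i) (∑ i, c i • v i) = ∑ i, B (v i) (v i) * c i ^ 2 := by
  simp_rw [map_sum, LinearMap.sum_apply, map_smul, LinearMap.smul_apply, smul_eq_mul]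
  refine sum_congr rfl fun i _ => ?_
  rw [sum_eq_single i (fun j _ hji => by rw [hv hji, mul_zero, mul_zero]) (by simp)]
  ring

theorem sum_addChar_apply_self_eq_prod [Fintype F] [Fintype V] [DecidableEq ι] {R : Type*}
    [CommRing R] {B : LinearMap.BilinForm F V} {v : Module.Basis ι F V} (hv : B.IsOrthoᵢ v)
    (ψ : AddChar F R) : ∑ x : V, ψ (B x x) = ∏ i, ∑ t : F, ψ (B (v i) (v i) * t ^ 2) := by
  rw [Fintype.prod_sum, ← v.equivFun.symm.toEquiv.sum_comp]
  refine sum_congr rfl fun c _ => ?_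
  rw [LinearEquiv.coe_toEquiv, Module.Basis.equivFun_symm_apply,
    apply_sum_smul_self_of_isOrthoᵢ hv, AddChar.map_sum_eq_prod]

end LinearMap.BilinForm

theorem Algebra.discr_eq_prod_of_isOrthoᵢ {A B ι : Type*} [CommRing A] [CommRing B]
    [Algebra A B] [Fintype ι] [DecidableEq ι] {v : ι → B}
    (hv : (Algebra.traceForm A B).IsOrthoᵢ v) :
    Algebra.discr A v = ∏ i, Algebra.traceForm A B (v i) (v i) := by
  rw [Algebra.discr_def, ← det_diagonal]
  congr 1
  ext i j
  rcases eq_or_ne i j with rfl | hij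
  · simp
  · simp [hij, hv hij]

def mooreMatrix {K : Type*} [Monoid K] (q : ℕ) {n : ℕ} (b : Fin n → K) :
    Matrix (Fin n) (Fin n) K :=
  Matrix.of fun i k => b i ^ q ^ (k : ℕ)

namespace FiniteField

variable {F : Type*} [Field F] [Fintype F]

theorem det_mooreMatrix_pow_card {K : Type*} [CommRing K] [Algebra F K] {n : ℕ} (b : Fin n → K)
    (hb : ∀ i, b i ^ Fintype.card F ^ n = b i) :
    (mooreMatrix (Fintype.card F) b).det ^ Fintype.card F =
      (-1) ^ (n - 1) * (mooreMatrix (Fintype.card F) b).det := by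
  cases n with
  | zero => simp
  | succ m =>
    have hrot : (mooreMatrix (Fintype.card F) b).map (frobeniusAlgHom F K) =
        (mooreMatrix (Fintype.card F) b).submatrix id (finRotate (m + 1)) := by
      ext i k
      simp only [map_apply, submatrix_apply, id_eq, mooreMatrix, of_apply,
        coe_frobeniusAlgHom, ← pow_mul, ← pow_succ, coe_finRotate]
      split_ifs with hk
      · rw [hk, Fin.val_last, pow_zero, pow_one, hb]
      · rfl
    calc (mooreMatrix (Fintype.card F) b).det ^ Fintype.card F
        = ((mooreMatrix (Fintype.card F) b).map (frobeniusAlgHom F K)).det :=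
          RingHom.map_det (frobeniusAlgHom F K : K →+* K) _
      _ = (-1) ^ (m + 1 - 1) * (mooreMatrix (Fintype.card F) b).det := by
          rw [hrot, det_permute', sign_finRotate]
          push_cast
          rfl

theorem quadraticChar_eq_of_algebraMap_pow_eq [DecidableEq F] (K : Type*) [Field K]
    [Algebra F K] (hF : ringChar F ≠ 2) {a : F} {e : ℤ} (he : e ∈ ({0, 1, -1} : Set ℤ))
    (h : algebraMap F K a ^ (Fintype.card F / 2) = e) : quadraticChar F a = e := by
  refine Int.cast_injOn_of_ringChar_ne_two (R := K) (Algebra.ringChar_eq F K ▸ hF)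
    (by simpa using quadraticChar_isQuadratic F a) he ?_
  rw [← h, ← map_pow, ← quadraticChar_eq_pow_of_char_ne_two' hF, map_intCast]

variable {K : Type*} [Field K] [Fintype K] [Algebra F K]

theorem traceMatrix_map_eq_mooreMatrix_mul_transpose (b : Fin (Module.finrank F K) → K) :
    (Algebra.traceMatrix F b).map (algebraMap F K) =
      mooreMatrix (Fintype.card F) b * (mooreMatrix (Fintype.card F) b)ᵀ := by
  ext i j
  simp only [map_apply, Algebra.traceMatrix_apply, Algebra.traceForm_apply,
    algebraMap_trace_eq_sum_pow, Nat.card_eq_fintype_card, mul_apply, mooreMatrix,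
    transpose_apply, of_apply, mul_pow,
    Fin.sum_univ_eq_sum_range (fun k => b i ^ Fintype.card F ^ k * b j ^ Fintype.card F ^ k)]

theorem algebraMap_discr_eq_det_mooreMatrix_sq (b : Fin (Module.finrank F K) → K) :
    algebraMap F K (Algebra.discr F b) = (mooreMatrix (Fintype.card F) b).det ^ 2 := by
  rw [Algebra.discr_def, RingHom.map_det, RingHom.mapMatrix_apply,
    traceMatrix_map_eq_mooreMatrix_mul_transpose, det_mul, det_transpose, sq]

theorem quadraticChar_discr [DecidableEq F] (hF : ringChar F ≠ 2)
    (b : Module.Basis (Fin (Module.finrank F K)) F K) :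
    quadraticChar F (Algebra.discr F b) = (-1) ^ (Module.finrank F K - 1) := by
  set δ := (mooreMatrix (Fintype.card F) b).det
  have hδ_sq : algebraMap F K (Algebra.discr F b) = δ ^ 2 :=
    algebraMap_discr_eq_det_mooreMatrix_sq _
  have hδ : δ ≠ 0 := by
    rintro h
    rw [h, zero_pow two_ne_zero, map_eq_zero] at hδ_sq
    exact Algebra.discr_not_zero_of_basis F b hδ_sq
  have hδ_frob : δ ^ Fintype.card F = (-1) ^ (Module.finrank F K - 1) * δ := by
    refine det_mooreMatrix_pow_card _ fun i => ?_
    rw [← Module.card_eq_pow_finrank, pow_card]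
  have hsign : (-1 : ℤ) ^ (Module.finrank F K - 1) ∈ ({0, 1, -1} : Set ℤ) := by
    rcases neg_one_pow_eq_or ℤ (Module.finrank F K - 1) with h | h <;> simp [h]
  refine quadraticChar_eq_of_algebraMap_pow_eq K hF hsign ?_
  rw [hδ_sq, ← pow_mul, Nat.two_mul_odd_div_two (odd_card_of_char_ne_two hF)]
  refine mul_right_cancel₀ hδ ?_
  rw [← pow_succ, Nat.sub_add_cancel Fintype.card_pos, hδ_frob]
  push_cast
  rfl

theorem quadraticChar_norm [DecidableEq F] [DecidableEq K] (hF : ringChar F ≠ 2) (x : K) :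
    quadraticChar F (Algebra.norm F x) = quadraticChar K x := by
  have hK : ringChar K ≠ 2 := Algebra.ringChar_eq F K ▸ hF
  have hqF := Nat.two_mul_odd_div_two (odd_card_of_char_ne_two hF)
  have hqK := Nat.two_mul_odd_div_two (odd_card_of_char_ne_two hK)
  obtain ⟨T, hT⟩ : Fintype.card F - 1 ∣ Fintype.card K - 1 := by
    simpa [Module.card_eq_pow_finrank (K := F) (V := K)] using
      Nat.sub_one_dvd_pow_sub_one (Fintype.card F) (Module.finrank F K)
  have hexp :
      (Nat.card K - 1) / (Nat.card F - 1) * (Fintype.card F / 2) = Fintype.card K / 2 := by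
    have hpos : 0 < Fintype.card F - 1 := Nat.sub_pos_of_lt Fintype.one_lt_card
    rw [Nat.card_eq_fintype_card, Nat.card_eq_fintype_card, hT, Nat.mul_div_cancel_left _ hpos]
    refine Nat.eq_of_mul_eq_mul_left two_pos ?_
    rw [hqK, hT, ← hqF]
    ring
  refine quadraticChar_eq_of_algebraMap_pow_eq K hF
    (by simpa using quadraticChar_isQuadratic K x) ?_
  rw [algebraMap_norm_eq_pow, ← pow_mul, hexp, quadraticChar_eq_pow_of_char_ne_two' hK]

theorem gaussSum_quadraticChar_comp_trace [DecidableEq F] [DecidableEq K] {R : Type*}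
    [CommRing R] [IsDomain R] (hF : ringChar F ≠ 2) {ψ : AddChar F R} (hψ : ψ.IsPrimitive) :
    gaussSum ((quadraticChar K).ringHomComp (Int.castRingHom R))
        (ψ.compAddMonoidHom (Algebra.trace F K).toAddMonoidHom) =
      -(-gaussSum ((quadraticChar F).ringHomComp (Int.castRingHom R)) ψ) ^
        Module.finrank F K := by
  set G := gaussSum ((quadraticChar F).ringHomComp (Int.castRingHom R)) ψ
  set B := Algebra.traceForm F K
  have hK : ringChar K ≠ 2 := Algebra.ringChar_eq F K ▸ hF
  have hψK : ψ.compAddMonoidHom (Algebra.trace F K).toAddMonoidHom ≠ 1 := by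
    obtain ⟨a, ha⟩ := AddChar.ne_one_iff.mp (by simpa using hψ one_ne_zero)
    obtain ⟨x, rfl⟩ := Algebra.trace_surjective F K a
    exact AddChar.ne_one_iff.mpr ⟨x, ha⟩
  have : Invertible (2 : F) := invertibleOfNonzero (Ring.two_ne_zero hF)
  obtain ⟨v, hv⟩ := LinearMap.BilinForm.exists_orthogonal_basis (B := B)
    (LinearMap.BilinForm.isSymm_iff.mp (Algebra.traceForm_isSymm F))
  have hvv (i) : B (v i) (v i) ≠ 0 :=
    hv.not_isOrtho_basis_self_of_separatingLeft (traceForm_nondegenerate F K).1 i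
  obtain ⟨m, hm⟩ := Nat.exists_eq_add_one_of_ne_zero (Module.finrank_pos (R := F) (M := K)).ne'
  calc _ = ∑ y : K, ψ (B y y) := by
        simp [← sum_addChar_sq_eq_gaussSum hK hψK, B, sq]
    _ = ∏ i, quadraticChar F (B (v i) (v i)) * G := by
        rw [LinearMap.BilinForm.sum_addChar_apply_self_eq_prod hv]
        exact prod_congr rfl fun i _ => sum_addChar_mul_sq hF hψ (hvv i)
    _ = quadraticChar F (Algebra.discr F v) * G ^ Module.finrank F K := by
        rw [Algebra.discr_eq_prod_of_isOrthoᵢ hv, map_prod, prod_mul_distrib, prod_const,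
          card_univ, Fintype.card_fin]
        push_cast
        rfl
    _ = _ := by
        rw [quadraticChar_discr hF, hm]
        push_cast
        ring

end FiniteField

theorem psiC_eq_stdAddChar (p : ℕ) [NeZero p] (a : ZMod p) : psiC p a = ZMod.stdAddChar a := by
  rw [ZMod.stdAddChar_apply, ZMod.toCircle_apply]
  rfl

theorem hasse_davenport_quadratic (p s : ℕ) [Fact p.Prime]
    [Fintype (GaloisField p s)] (hp : p % 4 = 1) (hs : s ≠ 0) :
    (∑ x : (GaloisField p s)ˣ,
        ((quadraticChar (ZMod p) (Algebra.norm (ZMod p) (x : GaloisField p s)) : ℤ) : ℂ) *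
          psiC p (Algebra.trace (ZMod p) (GaloisField p s) (x : GaloisField p s)) =
      -(-(∑ a : (ZMod p)ˣ,
            ((quadraticChar (ZMod p) (a : ZMod p) : ℤ) : ℂ) * psiC p (a : ZMod p))) ^ s) ∧
    (∀ x : GaloisField p s,
      (quadraticChar (GaloisField p s) x : ℤ) =
        (quadraticChar (ZMod p) (Algebra.norm (ZMod p) x) : ℤ)) := by
  have hF : ringChar (ZMod p) ≠ 2 := by rw [ZMod.ringChar_zmod_n]; omega
  refine ⟨?_, fun x => (FiniteField.quadraticChar_norm hF x).symm⟩
  calc _ = gaussSum ((quadraticChar (GaloisField p s)).ringHomComp (Int.castRingHom ℂ))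
        (ZMod.stdAddChar.compAddMonoidHom
          (Algebra.trace (ZMod p) (GaloisField p s)).toAddMonoidHom) := by
        simp [gaussSum_eq_sum_units, FiniteField.quadraticChar_norm hF, psiC_eq_stdAddChar]
    _ = _ := FiniteField.gaussSum_quadraticChar_comp_trace hF (ZMod.isPrimitive_stdAddChar p)
    _ = _ := by simp [GaloisField.finrank p hs, gaussSum_eq_sum_units, psiC_eq_stdAddChar]
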